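/- arXiv:1705.07300 — 5 statements merged into one kernel-verified Lean document; each statement's English description precedes it below -/
import Mathlib

section
/- Let (Ω, 𝓕, μ) be a probability space, S a finite index set, X_i : Ω → ℝ measurable and ℓ_i real thresholds for i ∈ S with ∑_{i∈S} ℓ_i ≥ M for a real number M. Fix f > 0, and for each i ∈ S let c_i ≥ 0 and define the bid B_i = c_i + f·μ({ω : X_i(ω) < ℓ_i}). Then μ({ω : ∑_{i∈S} X_i(ω) < M}) ≤ (1/f)·∑_{i∈S} B_i. -/
open MeasureTheory

/-! If the total reduction falls short of `M ≤ ∑ ℓ i`, some agent falls short of its own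
commitment, so the union bound gives `Pr[∑ X i < M] ≤ ∑ Pr[X i < ℓ i]`. Since `c i ≥ 0`,
each truthful bid is at least `f · Pr[X i < ℓ i]`, and dividing by `f` finishes the proof. -/

theorem setOf_sum_lt_subset_biUnion {Ω ι : Type*} (S : Finset ι) (X : ι → Ω → ℝ)
    {ℓ : ι → ℝ} {M : ℝ} (hℓ : M ≤ ∑ i ∈ S, ℓ i) :
    {ω | ∑ i ∈ S, X i ω < M} ⊆ ⋃ i ∈ S, {ω | X i ω < ℓ i} := by
  intro ω hω
  obtain ⟨i, hi, hlt⟩ := Finset.exists_lt_of_sum_lt (hω.trans_le hℓ)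
  exact Set.mem_biUnion hi hlt

theorem measureReal_sum_lt_le_sum {Ω ι : Type*} [MeasurableSpace Ω] (μ : Measure Ω)
    [IsFiniteMeasure μ] (S : Finset ι) (X : ι → Ω → ℝ) {ℓ : ι → ℝ} {M : ℝ}
    (hℓ : M ≤ ∑ i ∈ S, ℓ i) :
    μ.real {ω | ∑ i ∈ S, X i ω < M} ≤ ∑ i ∈ S, μ.real {ω | X i ω < ℓ i} :=
  (measureReal_mono (setOf_sum_lt_subset_biUnion S X hℓ) (measure_ne_top μ _)).trans
    (measureReal_biUnion_finset_le S _)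

theorem le_one_div_mul_of_eq_add_mul {p c f B : ℝ} (hf : 0 < f) (hc : 0 ≤ c)
    (hB : B = c + f * p) : p ≤ 1 / f * B := by
  rw [one_div_mul_eq_div, le_div_iff₀ hf, hB]
  linarith

theorem fixed_penalty_reliability_bound_general {Ω : Type*} [MeasurableSpace Ω] (μ : Measure Ω)
    [IsProbabilityMeasure μ] {ι : Type*} (S : Finset ι) (X : ι → Ω → ℝ) (ℓ : ι → ℝ)
    (M f : ℝ) (c B : ι → ℝ)
    (hℓ : M ≤ ∑ i ∈ S, ℓ i)
    (hf : 0 < f)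
    (hc : ∀ i ∈ S, 0 ≤ c i)
    (hB : ∀ i ∈ S, B i = c i + f * (μ {ω | X i ω < ℓ i}).toReal) :
    (μ {ω | ∑ i ∈ S, X i ω < M}).toReal ≤ (1 / f) * ∑ i ∈ S, B i :=
  calc (μ {ω | ∑ i ∈ S, X i ω < M}).toReal
      ≤ ∑ i ∈ S, (μ {ω | X i ω < ℓ i}).toReal := measureReal_sum_lt_le_sum μ S X hℓ
    _ ≤ ∑ i ∈ S, 1 / f * B i :=
      Finset.sum_le_sum fun i hi => le_one_div_mul_of_eq_add_mul hf (hc i hi) (hB i hi)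
    _ = 1 / f * ∑ i ∈ S, B i := (Finset.mul_sum S B (1 / f)).symm

/-- Fixed-penalty reliability bound: with truthful bids `B i = c i + f · Pr[X i < ℓ i]`
on fixed contracts with common penalty level `f > 0`, the probability of missing the
total reduction target `M` is at most `(1/f)` times the sum of bids. -/
theorem fixed_penalty_reliability_bound {Ω : Type*} [MeasurableSpace Ω] (μ : Measure Ω)
    [IsProbabilityMeasure μ] {ι : Type*} (S : Finset ι) (X : ι → Ω → ℝ) (ℓ : ι → ℝ)
    (M f : ℝ) (c B : ι → ℝ)
    (hX : ∀ i ∈ S, Measurable (X i))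
    (hℓ : M ≤ ∑ i ∈ S, ℓ i)
    (hf : 0 < f)
    (hc : ∀ i ∈ S, 0 ≤ c i)
    (hB : ∀ i ∈ S, B i = c i + f * (μ {ω | X i ω < ℓ i}).toReal) :
    (μ {ω | ∑ i ∈ S, X i ω < M}).toReal ≤ (1 / f) * ∑ i ∈ S, B i :=
  fixed_penalty_reliability_bound_general μ S X ℓ M f c B hℓ hf hc hB
end

section
/- Let (Ω, 𝓕, μ) be a probability space, S a finite index set, and for each i ∈ S let X_i : Ω → ℝ be measurable. Fix f > 0 and 0 < α < 1, and for each i ∈ S let ℓ_i > 0, β_i > 0 with f ≥ ℓ_i(1−α)β_i, let F_i be the Cliff penalty function with parameters (ℓ_i, f, α, β_i), let c_i ≥ 0, and define the bid B_i = c_i + ∫ F_i(X_i(ω)) dμ(ω). If ∑_{i∈S} ℓ_i ≥ M for a real number M, then μ({ω : ∑_{i∈S} X_i(ω) < α·M}) ≤ (1/f)·∑_{i∈S} B_i. -/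
/-!
On the event that the total reduction falls below `α·M ≤ α·∑ ℓ_i`, some agent falls below its
own cliff `α·ℓ_i` and so pays the full penalty `f`. Hence the (nonnegative) total penalty
dominates `f` times the indicator of that event, and Markov's inequality together with
`E[F_i(X_i)] ≤ B_i` gives the bound.
-/

open MeasureTheory

/-- The Cliff penalty function with parameters `(ℓ, f, α, β)`. -/
noncomputable def cliffPenalty (ℓ f α β : ℝ) (X : ℝ) : ℝ :=
  if X < α * ℓ then f else if X < ℓ then (ℓ - X) * β else 0

section CliffPenalty

variable {ℓ f α β : ℝ}

lemma cliffPenalty_of_lt {x : ℝ} (hx : x < α * ℓ) : cliffPenalty ℓ f α β x = f :=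
  if_pos hx

lemma cliffPenalty_nonneg (hf : 0 ≤ f) (hβ : 0 ≤ β) (x : ℝ) : 0 ≤ cliffPenalty ℓ f α β x := by
  unfold cliffPenalty
  split_ifs with h₁ h₂
  · exact hf
  · exact mul_nonneg (by linarith) hβ
  · exact le_rfl

lemma cliffPenalty_le_max (hf : 0 ≤ f) (hβ : 0 ≤ β) (x : ℝ) :
    cliffPenalty ℓ f α β x ≤ max f (ℓ * (1 - α) * β) := by
  unfold cliffPenalty
  split_ifs with h₁
  · exact le_max_left _ _
  · calc (ℓ - x) * β ≤ ℓ * (1 - α) * β := by nlinarith [not_lt.mp h₁]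
      _ ≤ _ := le_max_right _ _
  · exact hf.trans (le_max_left _ _)

lemma measurable_cliffPenalty : Measurable (cliffPenalty ℓ f α β) := by
  unfold cliffPenalty
  refine Measurable.ite measurableSet_Iio measurable_const
    (Measurable.ite measurableSet_Iio ?_ measurable_const)
  exact (measurable_const.sub measurable_id).mul measurable_const

lemma integrable_cliffPenalty_comp {Ω : Type*} [MeasurableSpace Ω] {μ : Measure Ω}
    [IsFiniteMeasure μ] {X : Ω → ℝ} (hX : Measurable X) (hf : 0 ≤ f) (hβ : 0 ≤ β) :
    Integrable (fun ω ↦ cliffPenalty ℓ f α β (X ω)) μ := by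
  refine Integrable.of_bound (measurable_cliffPenalty.comp hX).aestronglyMeasurable
    (max f (ℓ * (1 - α) * β)) (ae_of_all _ fun ω ↦ ?_)
  rw [Real.norm_of_nonneg (cliffPenalty_nonneg hf hβ _)]
  exact cliffPenalty_le_max hf hβ _

end CliffPenalty

lemma le_sum_cliffPenalty_of_sum_lt {ι : Type*} {S : Finset ι} {x ℓ β : ι → ℝ} {f α : ℝ}
    (hf : 0 ≤ f) (hβ : ∀ i ∈ S, 0 ≤ β i) (hx : ∑ i ∈ S, x i < α * ∑ i ∈ S, ℓ i) :
    f ≤ ∑ i ∈ S, cliffPenalty (ℓ i) f α (β i) (x i) := by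
  rw [Finset.mul_sum] at hx
  obtain ⟨i, hi, hxi⟩ := Finset.exists_lt_of_sum_lt hx
  calc f = cliffPenalty (ℓ i) f α (β i) (x i) := (cliffPenalty_of_lt hxi).symm
    _ ≤ _ := Finset.single_le_sum (fun j hj ↦ cliffPenalty_nonneg hf (hβ j hj) (x j)) hi

theorem cliff_reliability_bound_general {Ω : Type*} [MeasurableSpace Ω] (μ : Measure Ω)
    [IsProbabilityMeasure μ] {ι : Type*} (S : Finset ι) (X : ι → Ω → ℝ)
    (f α M : ℝ) (ℓ β c B : ι → ℝ)
    (hX : ∀ i ∈ S, Measurable (X i))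
    (hf : 0 < f) (hα0 : 0 < α)
    (hβ : ∀ i ∈ S, 0 < β i)
    (hc : ∀ i ∈ S, 0 ≤ c i)
    (hB : ∀ i ∈ S, B i = c i + ∫ ω, cliffPenalty (ℓ i) f α (β i) (X i ω) ∂μ)
    (hM : M ≤ ∑ i ∈ S, ℓ i) :
    (μ {ω | ∑ i ∈ S, X i ω < α * M}).toReal ≤ (1 / f) * ∑ i ∈ S, B i := by
  set penalty : Ω → ℝ := fun ω ↦ ∑ i ∈ S, cliffPenalty (ℓ i) f α (β i) (X i ω)
  have hint : ∀ i ∈ S, Integrable (fun ω ↦ cliffPenalty (ℓ i) f α (β i) (X i ω)) μ :=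
    fun i hi ↦ integrable_cliffPenalty_comp (hX i hi) hf.le (hβ i hi).le
  have hpenalty_nonneg : 0 ≤ᵐ[μ] penalty := ae_of_all _ fun ω ↦
    Finset.sum_nonneg fun i hi ↦ cliffPenalty_nonneg hf.le (hβ i hi).le _
  have hsubset : {ω | ∑ i ∈ S, X i ω < α * M} ⊆ {ω | f ≤ penalty ω} := fun ω hω ↦
    le_sum_cliffPenalty_of_sum_lt hf.le (fun i hi ↦ (hβ i hi).le)
      (lt_of_lt_of_le hω (mul_le_mul_of_nonneg_left hM hα0.le))
  have hmarkov := mul_meas_ge_le_integral_of_nonneg hpenalty_nonneg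
    (integrable_finsetSum S hint) f
  have hexpected : ∫ ω, penalty ω ∂μ ≤ ∑ i ∈ S, B i := by
    rw [integral_finsetSum S hint]
    exact Finset.sum_le_sum fun i hi ↦ by linarith [hB i hi, hc i hi]
  rw [one_div, inv_mul_eq_div, le_div_iff₀ hf, mul_comm]
  calc f * (μ {ω | ∑ i ∈ S, X i ω < α * M}).toReal
      ≤ f * μ.real {ω | f ≤ penalty ω} := by
        gcongr
        exact measureReal_mono hsubset
    _ ≤ ∑ i ∈ S, B i := hmarkov.trans hexpected

/-- Cliff-contract reliability bound: with truthful bids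
`B i = c i + E[F_i(X_i)]` on Cliff contracts `(ℓ i, f, α, β i)` sharing the same
`f > 0` and `0 < α < 1`, if the commitments sum to at least `M`, then the probability
that the total realized reduction falls below `α·M` is at most `(1/f)` times the
sum of bids. -/
theorem cliff_reliability_bound {Ω : Type*} [MeasurableSpace Ω] (μ : Measure Ω)
    [IsProbabilityMeasure μ] {ι : Type*} (S : Finset ι) (X : ι → Ω → ℝ)
    (f α M : ℝ) (ℓ β c B : ι → ℝ)
    (hX : ∀ i ∈ S, Measurable (X i))
    (hf : 0 < f) (hα0 : 0 < α) (hα1 : α < 1)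
    (hℓ : ∀ i ∈ S, 0 < ℓ i) (hβ : ∀ i ∈ S, 0 < β i)
    (hfℓ : ∀ i ∈ S, ℓ i * (1 - α) * β i ≤ f)
    (hc : ∀ i ∈ S, 0 ≤ c i)
    (hB : ∀ i ∈ S, B i = c i + ∫ ω, cliffPenalty (ℓ i) f α (β i) (X i ω) ∂μ)
    (hM : M ≤ ∑ i ∈ S, ℓ i) :
    (μ {ω | ∑ i ∈ S, X i ω < α * M}).toReal ≤ (1 / f) * ∑ i ∈ S, B i :=
  cliff_reliability_bound_general μ S X f α M ℓ β c B hX hf hα0 hβ hc hB hM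
end

section
/- In the DR-VCG setting, let i be a fixed agent with true costs C_i : J → ℝ with C_i(j) ≥ 0 for all j, let the other agents' bids B_{i'} : J → ℝ (nonnegative) be arbitrary, and let B' : J → ℝ be any alternative bid for agent i. Let σ* be any feasible assignment minimizing SB under the profile in which agent i bids C_i, and let σ' be any feasible assignment minimizing SB under the profile in which agent i bids B'. Then u_i(σ*) ≥ u_i(σ'), where in each case the payment r_i is computed with the Clarke pivot rule under the respective bid profile and u_i(σ) = r_i − C_i(j) if σ(i) = some j and u_i(σ) = r_i if σ(i) = none. Hence truthful bidding is a dominant strategy. -/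
open Finset

/-- An assignment of contracts is feasible if the declared commitments of the assigned
contracts sum to at least the reduction target `M`. -/
def Feasible {N J : Type*} [Fintype N] (ℓ : J → ℕ) (M : ℕ) (σ : N → Option J) : Prop :=
  M ≤ ∑ i, Option.elim (σ i) 0 ℓ

/-- The sum of bids of an assignment. -/
def SB {N J : Type*} [Fintype N] (B : N → J → ℝ) (σ : N → Option J) : ℝ :=
  ∑ i, Option.elim (σ i) 0 (B i)

/-- The sum of bids of an assignment, omitting agent `i`. -/
def SBminus {N J : Type*} [Fintype N] [DecidableEq N] (B : N → J → ℝ) (i : N)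
    (σ : N → Option J) : ℝ :=
  ∑ i' ∈ Finset.univ.erase i, Option.elim (σ i') 0 (B i')

/-- `OPTminus ℓ M B i` is the minimum sum of bids over feasible assignments in which
agent `i` is not selected. -/
noncomputable def OPTminus {N J : Type*} [Fintype N] (ℓ : J → ℕ) (M : ℕ)
    (B : N → J → ℝ) (i : N) : ℝ :=
  sInf {x | ∃ σ : N → Option J, Feasible ℓ M σ ∧ σ i = none ∧ SB B σ = x}

/-- The Clarke-pivot payment to agent `i` given an `SB`-minimizing feasible
assignment `σstar`. -/
noncomputable def clarke {N J : Type*} [Fintype N] [DecidableEq N] (ℓ : J → ℕ) (M : ℕ)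
    (B : N → J → ℝ) (i : N) (σstar : N → Option J) : ℝ :=
  OPTminus ℓ M B i - SBminus B i σstar

/-!
Agent `i`'s utility under any bid at an assignment `σ` equals `OPTminus ℓ M B i` minus the
true social cost `SB (Function.update B i C) σ`. The pivot term does not depend on what `i`
bids, so maximizing utility is minimizing the true social cost, which `σstar` does.
-/

section Update

variable {N J : Type*} [Fintype N] [DecidableEq N]

lemma SB_eq_SBminus_add (B : N → J → ℝ) (i : N) (σ : N → Option J) :
    SB B σ = SBminus B i σ + (σ i).elim 0 (B i) := by
  rw [SB, SBminus, ← Finset.add_sum_erase _ _ (Finset.mem_univ i), add_comm]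

lemma SBminus_update_self (B : N → J → ℝ) (i : N) (f : J → ℝ) (σ : N → Option J) :
    SBminus (Function.update B i f) i σ = SBminus B i σ :=
  Finset.sum_congr rfl fun _ hi' => by
    rw [Function.update_of_ne (Finset.ne_of_mem_erase hi')]

lemma SB_update_self (B : N → J → ℝ) (i : N) (f : J → ℝ) (σ : N → Option J) :
    SB (Function.update B i f) σ = SBminus B i σ + (σ i).elim 0 f := by
  rw [SB_eq_SBminus_add _ i, SBminus_update_self, Function.update_self]

lemma OPTminus_update_self (ℓ : J → ℕ) (M : ℕ) (B : N → J → ℝ) (i : N) (f : J → ℝ) :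
    OPTminus ℓ M (Function.update B i f) i = OPTminus ℓ M B i := by
  unfold OPTminus
  congr 1
  ext x
  refine exists_congr fun σ => and_congr_right fun _ => and_congr_right fun hσi => ?_
  rw [SB_update_self, SB_eq_SBminus_add B i, hσi]
  rfl

lemma clarke_update_sub_elim (ℓ : J → ℕ) (M : ℕ) (B : N → J → ℝ) (i : N) (f C : J → ℝ)
    (σ : N → Option J) :
    clarke ℓ M (Function.update B i f) i σ - (σ i).elim 0 C =
      OPTminus ℓ M B i - SB (Function.update B i C) σ := by
  rw [clarke, OPTminus_update_self, SBminus_update_self, SB_update_self]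
  ring

end Update

theorem drvcg_truthful_general {N J : Type*} [Fintype N] [DecidableEq N]
    (ℓ : J → ℕ) (M : ℕ) (i : N) (C B' : J → ℝ) (B : N → J → ℝ)
    (σstar σ' : N → Option J)
    (hstar_opt : ∀ σ, Feasible ℓ M σ →
      SB (Function.update B i C) σstar ≤ SB (Function.update B i C) σ)
    (h'_feas : Feasible ℓ M σ') :
    clarke ℓ M (Function.update B i B') i σ' - Option.elim (σ' i) 0 C ≤
      clarke ℓ M (Function.update B i C) i σstar - Option.elim (σstar i) 0 C := by
  rw [clarke_update_sub_elim, clarke_update_sub_elim]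
  linarith [hstar_opt σ' h'_feas]

/-- Truthfulness of DR-VCG: agent `i`'s utility when bidding its true costs `C`
(at any `SB`-minimizing feasible assignment `σstar`, with Clarke-pivot payment)
is at least its utility when submitting any alternative bid `B'` (at any
`SB`-minimizing feasible assignment `σ'` for the deviating profile). -/
theorem drvcg_truthful {N J : Type*} [Fintype N] [DecidableEq N] [Fintype J]
    (ℓ : J → ℕ) (M : ℕ) (i : N) (C B' : J → ℝ) (B : N → J → ℝ)
    (hC : ∀ j, 0 ≤ C j) (hB : ∀ i' j, 0 ≤ B i' j)
    (hnone : ∀ i0 : N, ∃ σ : N → Option J, Feasible ℓ M σ ∧ σ i0 = none)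
    (σstar σ' : N → Option J)
    (hstar_feas : Feasible ℓ M σstar)
    (hstar_opt : ∀ σ, Feasible ℓ M σ →
      SB (Function.update B i C) σstar ≤ SB (Function.update B i C) σ)
    (h'_feas : Feasible ℓ M σ')
    (h'_opt : ∀ σ, Feasible ℓ M σ →
      SB (Function.update B i B') σ' ≤ SB (Function.update B i B') σ) :
    clarke ℓ M (Function.update B i B') i σ' - Option.elim (σ' i) 0 C ≤
      clarke ℓ M (Function.update B i C) i σstar - Option.elim (σstar i) 0 C :=
  drvcg_truthful_general ℓ M i C B' B σstar σ' hstar_opt h'_feas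
end

section
/- In the DR-VCG setting with arbitrary nonnegative bids B, let σ* be any feasible assignment minimizing SB. If σ*(i) = some j for an agent i and contract j, then the Clarke-pivot payment satisfies r_i ≥ B(i)(j); that is, every selected agent is paid at least its bid on its assigned contract. -/
open Finset

theorem SB_eq_add_SBminus {N J : Type*} [Fintype N] [DecidableEq N] (B : N → J → ℝ)
    (σ : N → Option J) (i : N) :
    SB B σ = Option.elim (σ i) 0 (B i) + SBminus B i σ :=
  (add_sum_erase _ _ (mem_univ i)).symm

theorem le_OPTminus {N J : Type*} [Fintype N] {ℓ : J → ℕ} {M : ℕ} {B : N → J → ℝ} {i : N}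
    {c : ℝ} (hex : ∃ σ : N → Option J, Feasible ℓ M σ ∧ σ i = none)
    (hc : ∀ σ, Feasible ℓ M σ → σ i = none → c ≤ SB B σ) :
    c ≤ OPTminus ℓ M B i := by
  obtain ⟨σ, hfeas, hnone⟩ := hex
  refine le_csInf ⟨SB B σ, σ, hfeas, hnone, rfl⟩ ?_
  rintro x ⟨τ, hτ, hτi, rfl⟩
  exact hc τ hτ hτi

theorem drvcg_payment_ge_bid_general {N J : Type*} [Fintype N] [DecidableEq N]
    (ℓ : J → ℕ) (M : ℕ) (B : N → J → ℝ)
    (hnone : ∀ i0 : N, ∃ σ : N → Option J, Feasible ℓ M σ ∧ σ i0 = none)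
    (σstar : N → Option J)
    (hstar_opt : ∀ σ, Feasible ℓ M σ → SB B σstar ≤ SB B σ)
    (i : N) (j : J) (hij : σstar i = some j) :
    B i j ≤ clarke ℓ M B i σstar := by
  have hsplit : SB B σstar = B i j + SBminus B i σstar := by
    rw [SB_eq_add_SBminus B σstar i, hij]
    rfl
  have hopt : SB B σstar ≤ OPTminus ℓ M B i :=
    le_OPTminus (hnone i) fun σ hσ _ => hstar_opt σ hσ
  rw [clarke]
  linarith

/-- Every selected agent is paid at least its bid on its assigned contract: if `σstar`
is an `SB`-minimizing feasible assignment and `σstar i = some j`, then the Clarke-pivot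
payment to `i` is at least `B i j`. -/
theorem drvcg_payment_ge_bid {N J : Type*} [Fintype N] [DecidableEq N] [Fintype J]
    (ℓ : J → ℕ) (M : ℕ) (B : N → J → ℝ)
    (hB : ∀ i' j, 0 ≤ B i' j)
    (hnone : ∀ i0 : N, ∃ σ : N → Option J, Feasible ℓ M σ ∧ σ i0 = none)
    (σstar : N → Option J)
    (hstar_feas : Feasible ℓ M σstar)
    (hstar_opt : ∀ σ, Feasible ℓ M σ → SB B σstar ≤ SB B σ)
    (i : N) (j : J) (hij : σstar i = some j) :
    B i j ≤ clarke ℓ M B i σstar :=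
  drvcg_payment_ge_bid_general ℓ M B hnone σstar hstar_opt i j hij
end

section
/- Let n, k be natural numbers, ℓ : Fin k → ℕ commitments, and B : Fin n → Fin k → ℝ nonnegative bids. For t ≤ n and m ∈ ℕ, let A(t, m) be the set of assignments σ : Fin n → Option (Fin k) such that σ(i) = none for all i with i ≥ t, and ∑_{i : σ(i) = some j} ℓ(j) = m; let OPT(t, m) ∈ WithTop ℝ be the infimum of SB(σ) = ∑_{i : σ(i) = some j} B(i)(j) over σ ∈ A(t, m) (with value ⊤ if A(t, m) is empty). Then for every t < n and every m: OPT(t+1, m) = min( OPT(t, m), min over contracts j with ℓ(j) ≤ m of ( OPT(t, m − ℓ(j)) + B(t)(j) ) ). -/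
open Finset

/-- `dpOPT n k ℓ B t m` is the minimum sum of bids over assignments `σ` that assign
contracts only to agents of index `< t` and whose commitments sum to exactly `m`
(and is `⊤` if no such assignment exists). -/
noncomputable def dpOPT (n k : ℕ) (ℓ : Fin k → ℕ) (B : Fin n → Fin k → ℝ)
    (t m : ℕ) : WithTop ℝ :=
  (Finset.univ.filter (fun σ : Fin n → Option (Fin k) =>
      (∀ i : Fin n, t ≤ (i : ℕ) → σ i = none) ∧
      ∑ i, Option.elim (σ i) 0 ℓ = m)).inf
    (fun σ => ((∑ i, Option.elim (σ i) 0 (B i) : ℝ) : WithTop ℝ))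

/-!
An assignment feasible for the first `t + 1` agents either leaves agent `t` idle, and is then
feasible for the first `t` agents with the same total commitment, or gives agent `t` some
contract `j`, and is then the extension by `j` of an assignment feasible for the first `t`
agents with commitment `m - ℓ j`. Both bids and commitments are additive under such an
extension, so minimizing over the two kinds of assignments gives the recurrence.
-/

variable {n k : ℕ}

/-- `assignmentSum B` is the sum of bids `SB`; `assignmentSum (fun _ => ℓ)` is the total
commitment. -/
def assignmentSum {M : Type*} [AddCommMonoid M] (w : Fin n → Fin k → M)
    (σ : Fin n → Option (Fin k)) : M :=
  ∑ i, (σ i).elim 0 (w i)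

theorem assignmentSum_update_some {M : Type*} [AddCommMonoid M] (w : Fin n → Fin k → M)
    {σ : Fin n → Option (Fin k)} {a : Fin n} (ha : σ a = none) (j : Fin k) :
    assignmentSum w (Function.update σ a (some j)) = assignmentSum w σ + w a j := by
  have hσ : σ = Function.update σ a none := by rw [← ha, Function.update_eq_self]
  unfold assignmentSum
  conv_rhs => rw [hσ]
  simp only [Function.apply_update (fun i (x : Option (Fin k)) => x.elim 0 (w i)),
    Finset.sum_update_of_mem (Finset.mem_univ a), Option.elim_some, Option.elim_none, zero_add,
    add_comm]

def IsFeasible (ℓ : Fin k → ℕ) (t m : ℕ) (σ : Fin n → Option (Fin k)) : Prop :=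
  (∀ i : Fin n, t ≤ (i : ℕ) → σ i = none) ∧ assignmentSum (fun _ => ℓ) σ = m

namespace IsFeasible

variable {ℓ : Fin k → ℕ} {t m : ℕ} {σ : Fin n → Option (Fin k)} {a : Fin n}
  {j : Fin k}

theorem mono (h : IsFeasible ℓ t m σ) {t' : ℕ} (htt' : t ≤ t') : IsFeasible ℓ t' m σ :=
  ⟨fun i hi => h.1 i (htt'.trans hi), h.2⟩

theorem of_succ (h : IsFeasible ℓ (a + 1) m σ) (ha : σ a = none) : IsFeasible ℓ a m σ := by
  refine ⟨fun i hi => ?_, h.2⟩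
  rcases hi.eq_or_lt with hia | hia
  · rwa [Fin.ext hia.symm]
  · exact h.1 i hia

theorem update_some (h : IsFeasible ℓ a (m - ℓ j) σ) (hj : ℓ j ≤ m) :
    IsFeasible ℓ (a + 1) m (Function.update σ a (some j)) := by
  refine ⟨fun i hi => ?_, ?_⟩
  · rw [Function.update_of_ne (by rintro rfl; omega)]
    exact h.1 i (by omega)
  · rw [assignmentSum_update_some _ (h.1 a le_rfl), h.2]
    omega

theorem update_none (h : IsFeasible ℓ (a + 1) m σ) (ha : σ a = some j) :
    ℓ j ≤ m ∧ IsFeasible ℓ a (m - ℓ j) (Function.update σ a none) := by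
  have hsum := assignmentSum_update_some (fun _ => ℓ) (Function.update_self a none σ) j
  rw [Function.update_idem, ← ha, Function.update_eq_self, h.2] at hsum
  refine ⟨by omega, IsFeasible.of_succ ⟨fun i hi => ?_, by omega⟩ (Function.update_self ..)⟩
  rw [Function.update_of_ne (by rintro rfl; omega)]
  exact h.1 i hi

end IsFeasible

section dpOPT

variable {ℓ : Fin k → ℕ} {B : Fin n → Fin k → ℝ} {t m : ℕ}

theorem dpOPT_le {σ : Fin n → Option (Fin k)} (h : IsFeasible ℓ t m σ) :
    dpOPT n k ℓ B t m ≤ (assignmentSum B σ : ℝ) :=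
  Finset.inf_le (Finset.mem_filter.2 ⟨mem_univ σ, h⟩)

theorem le_dpOPT {x : WithTop ℝ} (h : ∀ σ, IsFeasible ℓ t m σ → x ≤ (assignmentSum B σ : ℝ)) :
    x ≤ dpOPT n k ℓ B t m :=
  Finset.le_inf fun σ hσ => h σ (Finset.mem_filter.1 hσ).2

theorem le_dpOPT_add {x c : WithTop ℝ}
    (h : ∀ σ, IsFeasible ℓ t m σ → x ≤ (assignmentSum B σ : ℝ) + c) :
    x ≤ dpOPT n k ℓ B t m + c := by
  rw [dpOPT, Finset.apply_inf_eq_inf_comp_of_linearOrder (· + c) (fun _ _ h => add_le_add h le_rfl)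
    (WithTop.top_add c)]
  exact Finset.le_inf fun σ hσ => h σ (Finset.mem_filter.1 hσ).2

end dpOPT

theorem dpOPT_recurrence_general (n k : ℕ) (ℓ : Fin k → ℕ) (B : Fin n → Fin k → ℝ)
    (t : ℕ) (ht : t < n) (m : ℕ) :
    dpOPT n k ℓ B (t + 1) m =
      min (dpOPT n k ℓ B t m)
        ((Finset.univ.filter (fun j : Fin k => ℓ j ≤ m)).inf
          (fun j => dpOPT n k ℓ B t (m - ℓ j) + ((B ⟨t, ht⟩ j : ℝ) : WithTop ℝ))) := by
  set a : Fin n := ⟨t, ht⟩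
  apply le_antisymm
  · refine le_min (le_dpOPT fun σ hσ => dpOPT_le (hσ.mono t.le_succ)) ?_
    refine Finset.le_inf fun j hj => le_dpOPT_add fun σ hσ => ?_
    rw [← WithTop.coe_add, ← assignmentSum_update_some B (hσ.1 a le_rfl)]
    exact dpOPT_le (hσ.update_some (a := a) (by simpa using hj))
  · refine le_dpOPT fun σ hσ => ?_
    cases hσa : σ a with
    | none => exact (min_le_left _ _).trans (dpOPT_le (hσ.of_succ hσa))
    | some j =>
      obtain ⟨hj, hσ'⟩ := hσ.update_none hσa
      refine (min_le_right _ _).trans ((inf_le (by simpa using hj)).trans ?_)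
      have hσ_eq : σ = Function.update (Function.update σ a none) a (some j) := by
        rw [Function.update_idem, ← hσa, Function.update_eq_self]
      rw [hσ_eq, assignmentSum_update_some B (Function.update_self a none σ), WithTop.coe_add]
      exact add_le_add_left (dpOPT_le hσ') _

/-- Bellman recurrence for the demand-response knapsack dynamic program: the optimum
using the first `t + 1` agents for exact commitment `m` is the minimum of the optimum
without agent `t`, and, over all contracts `j` with `ℓ j ≤ m`, of the optimum for the
first `t` agents and commitment `m - ℓ j` plus agent `t`'s bid on `j`. -/
theorem dpOPT_recurrence (n k : ℕ) (ℓ : Fin k → ℕ) (B : Fin n → Fin k → ℝ)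
    (hB : ∀ i j, 0 ≤ B i j) (t : ℕ) (ht : t < n) (m : ℕ) :
    dpOPT n k ℓ B (t + 1) m =
      min (dpOPT n k ℓ B t m)
        ((Finset.univ.filter (fun j : Fin k => ℓ j ≤ m)).inf
          (fun j => dpOPT n k ℓ B t (m - ℓ j) + ((B ⟨t, ht⟩ j : ℝ) : WithTop ℝ))) :=
  dpOPT_recurrence_general n k ℓ B t ht m
end
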